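/- arXiv:2408.06542 — 4 statements merged into one kernel-verified Lean document; each statement's English description precedes it below -/
import Mathlib

section
/- Let V'^π be the value function of (π, R, P), let V^{π'}_{M} be the value function of (π', R, P), and let V' be the value function of (π', R', P') with induced state-action value Q'(s,a) = R'(s,a) + γ ∑_{s'} P'(s'|s,a) V'(s') and advantage A'(s,a) = Q'(s,a) − V'(s). Let d^π be the normalized discounted occupancy of π in P and d^{π'} the normalized discounted occupancy of π' in P. Then J_{P,R}(π) − J_{P,R}(π') = (1/(1−γ)) ∑_{(s,a)} d^π(s,a)·A'(s,a) + (1/(1−γ)) ∑_{(s,a)} d^{π'}(s,a)·[ΔR(s,a) + γ(∑_{s'} P'(s'|s,a) V'(s') − ∑_{s'} P(s'|s,a) V'(s'))] + (1/(1−γ)) ∑_{(s,a)} d^π(s,a)·[−ΔR(s,a) + γ(∑_{s'} P(s'|s,a) V'(s') − ∑_{s'} P'(s'|s,a) V'(s'))]. -/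
/-!
Write `⟨d, f⟩ = ∑_{(s,a)} d(s,a) f(s,a)`. Two facts about the occupancy `d` of a policy `ρ` in `P`
do all the work. Since `d(s,a) = ρ(a|s) · d(s)` factors through the policy, `⟨d, Q⟩ = ⟨d, V⟩`
whenever `V(s) = ∑_a ρ(a|s) Q(s,a)`; and summing the defining equation of `d` over actions gives
the flow identity `⟨d, W − γ P W⟩ = (1 − γ) μ W` for every `W : S → ℝ`. Together they give
`(1 − γ) J_{P,R}(ρ) = ⟨d, R⟩`. Multiplied by `1 − γ`, the right-hand side of the lemma collapses to
`⟨dπ, R + γ P V' − V'⟩ + ⟨dπ', R' + γ P' V' − R − γ P V'⟩`; the first identity for `V'` under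
`dπ'` and the flow identity for `V'` under both occupancies reduce this to `⟨dπ, R⟩ − ⟨dπ', R⟩`.
-/

open Finset

/-- A belief over a finite set: nonnegative and sums to one. -/
def IsBelief {X : Type*} [Fintype X] (p : X → ℝ) : Prop :=
  (∀ x, 0 ≤ p x) ∧ ∑ x, p x = 1

def IsValueFunction {S A : Type*} [Fintype S] [Fintype A] (γ : ℝ) (ρ r : S → A → ℝ)
    (K : S → A → S → ℝ) (V : S → ℝ) : Prop :=
  ∀ s, V s = ∑ a, ρ s a * (r s a + γ * ∑ s', K s a s' * V s')

def IsOccupancy {S A : Type*} [Fintype S] [Fintype A] (γ : ℝ) (μ : S → ℝ) (ρ : S → A → ℝ)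
    (K : S → A → S → ℝ) (d : S → A → ℝ) : Prop :=
  ∀ s a, d s a = (1 - γ) * μ s * ρ s a + γ * ρ s a * ∑ p : S × A, K p.1 p.2 s * d p.1 p.2

namespace IsOccupancy

variable {S A : Type*} [Fintype S] [Fintype A] {γ : ℝ} {μ : S → ℝ} {ρ : S → A → ℝ}
  {K : S → A → S → ℝ} {d : S → A → ℝ}

theorem sum_eq (hd : IsOccupancy γ μ ρ K d) (hρ : ∀ s, ∑ a, ρ s a = 1) (s : S) :
    ∑ a, d s a = (1 - γ) * μ s + γ * ∑ p : S × A, K p.1 p.2 s * d p.1 p.2 := by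
  calc ∑ a, d s a
      = ∑ a, ρ s a * ((1 - γ) * μ s + γ * ∑ p : S × A, K p.1 p.2 s * d p.1 p.2) :=
        sum_congr rfl fun a _ => by rw [hd s a]; ring
    _ = _ := by rw [← sum_mul, hρ s, one_mul]

theorem eq_mul_sum (hd : IsOccupancy γ μ ρ K d) (hρ : ∀ s, ∑ a, ρ s a = 1) (s : S) (a : A) :
    d s a = ρ s a * ∑ a', d s a' := by
  rw [hd.sum_eq hρ, hd s]
  ring

theorem sum_mul_sub_discounted_next (hd : IsOccupancy γ μ ρ K d)
    (hρ : ∀ s, ∑ a, ρ s a = 1) (W : S → ℝ) :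
    ∑ p : S × A, d p.1 p.2 * (W p.1 - γ * ∑ s', K p.1 p.2 s' * W s')
      = (1 - γ) * ∑ s, μ s * W s := by
  have hflow : ∑ p : S × A, d p.1 p.2 * W p.1
      = (1 - γ) * ∑ s, μ s * W s + γ * ∑ p : S × A, d p.1 p.2 * ∑ s', K p.1 p.2 s' * W s' := by
    calc ∑ p : S × A, d p.1 p.2 * W p.1
        = ∑ s, (∑ a, d s a) * W s := by
          simp only [Fintype.sum_prod_type, sum_mul]
      _ = ∑ s, ((1 - γ) * μ s + γ * ∑ p : S × A, K p.1 p.2 s * d p.1 p.2) * W s := by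
          simp only [hd.sum_eq hρ]
      _ = _ := by
          simp only [add_mul, sum_add_distrib, mul_sum, sum_mul]
          rw [sum_comm (s := univ (α := S))]
          congr 1
          · exact sum_congr rfl fun _ _ => by ring
          · exact sum_congr rfl fun _ _ => sum_congr rfl fun _ _ => by ring
  simp only [mul_sub, sum_sub_distrib, hflow, mul_left_comm _ γ, ← mul_sum]
  ring

theorem sum_mul_eq_sum_mul_average (hd : IsOccupancy γ μ ρ K d)
    (hρ : ∀ s, ∑ a, ρ s a = 1) {Q : S → A → ℝ} {V : S → ℝ}
    (hV : ∀ s, V s = ∑ a, ρ s a * Q s a) :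
    ∑ p : S × A, d p.1 p.2 * Q p.1 p.2 = ∑ p : S × A, d p.1 p.2 * V p.1 := by
  simp only [Fintype.sum_prod_type]
  refine sum_congr rfl fun s _ => ?_
  calc ∑ a, d s a * Q s a
      = (∑ a, d s a) * ∑ a, ρ s a * Q s a := by
        rw [mul_sum]
        exact sum_congr rfl fun a _ => by rw [hd.eq_mul_sum hρ s a]; ring
    _ = ∑ a, d s a * V s := by rw [← hV, sum_mul]

theorem one_sub_mul_return_eq_sum_mul_reward (hd : IsOccupancy γ μ ρ K d)
    (hρ : ∀ s, ∑ a, ρ s a = 1) {r : S → A → ℝ} {V : S → ℝ} (hV : IsValueFunction γ ρ r K V) :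
    (1 - γ) * ∑ s, μ s * V s = ∑ p : S × A, d p.1 p.2 * r p.1 p.2 := by
  have hQ := hd.sum_mul_eq_sum_mul_average hρ hV
  rw [← hd.sum_mul_sub_discounted_next hρ V]
  simp only [mul_sub, mul_add, sum_sub_distrib, sum_add_distrib] at hQ ⊢
  linarith

end IsOccupancy

theorem performance_difference_mismatched_mdps_general
    {S A : Type*} [Fintype S] [Fintype A]
    (γ : ℝ) (hγ1 : γ < 1)
    (μ : S → ℝ)
    (P P' : S → A → S → ℝ)
    (R R' : S → A → ℝ)
    (π π' : S → A → ℝ)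
    (hπ : ∀ s, IsBelief (π s)) (hπ' : ∀ s, IsBelief (π' s))
    -- value functions: Vπ of (π, R, P); VM' of (π', R, P); V' of (π', R', P')
    (Vπ VM' V' : S → ℝ)
    (hVπ : ∀ s, Vπ s = ∑ a, π s a * (R s a + γ * ∑ s', P s a s' * Vπ s'))
    (hVM' : ∀ s, VM' s = ∑ a, π' s a * (R s a + γ * ∑ s', P s a s' * VM' s'))
    (hV' : ∀ s, V' s = ∑ a, π' s a * (R' s a + γ * ∑ s', P' s a s' * V' s'))
    -- normalized discounted occupancies of π and π' in P
    (dπ dπ' : S → A → ℝ)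
    (hdπ : ∀ s a, dπ s a = (1 - γ) * μ s * π s a
        + γ * π s a * ∑ p : S × A, P p.1 p.2 s * dπ p.1 p.2)
    (hdπ' : ∀ s a, dπ' s a = (1 - γ) * μ s * π' s a
        + γ * π' s a * ∑ p : S × A, P p.1 p.2 s * dπ' p.1 p.2) :
    (∑ s, μ s * Vπ s) - (∑ s, μ s * VM' s)
      = (1 / (1 - γ)) * (∑ p : S × A, dπ p.1 p.2 *
          ((R' p.1 p.2 + γ * ∑ s', P' p.1 p.2 s' * V' s') - V' p.1))
      + (1 / (1 - γ)) * (∑ p : S × A, dπ' p.1 p.2 *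
          ((R' p.1 p.2 - R p.1 p.2)
            + γ * ((∑ s', P' p.1 p.2 s' * V' s') - (∑ s', P p.1 p.2 s' * V' s'))))
      + (1 / (1 - γ)) * (∑ p : S × A, dπ p.1 p.2 *
          (-(R' p.1 p.2 - R p.1 p.2)
            + γ * ((∑ s', P p.1 p.2 s' * V' s') - (∑ s', P' p.1 p.2 s' * V' s')))) := by
  have hρ : ∀ s, ∑ a, π s a = 1 := fun s => (hπ s).2
  have hρ' : ∀ s, ∑ a, π' s a = 1 := fun s => (hπ' s).2
  have hJπ := IsOccupancy.one_sub_mul_return_eq_sum_mul_reward hdπ hρ hVπ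
  have hJπ' := IsOccupancy.one_sub_mul_return_eq_sum_mul_reward hdπ' hρ' hVM'
  have hflowπ := IsOccupancy.sum_mul_sub_discounted_next hdπ hρ V'
  have hflowπ' := IsOccupancy.sum_mul_sub_discounted_next hdπ' hρ' V'
  have hQ' := IsOccupancy.sum_mul_eq_sum_mul_average hdπ' hρ' hV'
  have hne : (1 : ℝ) - γ ≠ 0 := by linarith
  rw [← mul_add, ← mul_add, one_div, eq_inv_mul_iff_mul_eq₀ hne]
  simp only [mul_add, mul_sub, mul_neg, sum_add_distrib, sum_sub_distrib, sum_neg_distrib]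
    at hflowπ hflowπ' hQ' ⊢
  linear_combination hJπ - hJπ' + hflowπ - hflowπ' - hQ'

/-- Performance difference lemma in mismatched MDPs (Lemma 1). -/
theorem performance_difference_mismatched_mdps
    {S A : Type*} [Fintype S] [Fintype A]
    (γ : ℝ) (hγ0 : 0 < γ) (hγ1 : γ < 1)
    (μ : S → ℝ) (hμ : IsBelief μ)
    (P P' : S → A → S → ℝ)
    (hP : ∀ s a, IsBelief (P s a)) (hP' : ∀ s a, IsBelief (P' s a))
    (R R' : S → A → ℝ)
    (π π' : S → A → ℝ)
    (hπ : ∀ s, IsBelief (π s)) (hπ' : ∀ s, IsBelief (π' s))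
    -- value functions: Vπ of (π, R, P); VM' of (π', R, P); V' of (π', R', P')
    (Vπ VM' V' : S → ℝ)
    (hVπ : ∀ s, Vπ s = ∑ a, π s a * (R s a + γ * ∑ s', P s a s' * Vπ s'))
    (hVM' : ∀ s, VM' s = ∑ a, π' s a * (R s a + γ * ∑ s', P s a s' * VM' s'))
    (hV' : ∀ s, V' s = ∑ a, π' s a * (R' s a + γ * ∑ s', P' s a s' * V' s'))
    -- normalized discounted occupancies of π and π' in P
    (dπ dπ' : S → A → ℝ)
    (hdπ : ∀ s a, dπ s a = (1 - γ) * μ s * π s a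
        + γ * π s a * ∑ p : S × A, P p.1 p.2 s * dπ p.1 p.2)
    (hdπ' : ∀ s a, dπ' s a = (1 - γ) * μ s * π' s a
        + γ * π' s a * ∑ p : S × A, P p.1 p.2 s * dπ' p.1 p.2) :
    (∑ s, μ s * Vπ s) - (∑ s, μ s * VM' s)
      = (1 / (1 - γ)) * (∑ p : S × A, dπ p.1 p.2 *
          ((R' p.1 p.2 + γ * ∑ s', P' p.1 p.2 s' * V' s') - V' p.1))
      + (1 / (1 - γ)) * (∑ p : S × A, dπ' p.1 p.2 *
          ((R' p.1 p.2 - R p.1 p.2)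
            + γ * ((∑ s', P' p.1 p.2 s' * V' s') - (∑ s', P p.1 p.2 s' * V' s'))))
      + (1 / (1 - γ)) * (∑ p : S × A, dπ p.1 p.2 *
          (-(R' p.1 p.2 - R p.1 p.2)
            + γ * ((∑ s', P p.1 p.2 s' * V' s') - (∑ s', P' p.1 p.2 s' * V' s')))) :=
  performance_difference_mismatched_mdps_general γ hγ1 μ P P' R R' π π' hπ hπ' Vπ VM' V' hVπ hVM'
    hV' dπ dπ' hdπ hdπ'
end

section
/- Let p and q be beliefs over a finite set X such that q(x) = 0 implies p(x) = 0, and let f : X → ℝ satisfy |f(x)| ≤ M for all x ∈ X. Then |∑_{x∈X} f(x)·(p(x) − q(x))| ≤ M·√(2·KL(p‖q)). -/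
noncomputable def KL {X : Type*} [Fintype X] (p q : X → ℝ) : ℝ :=
  ∑ x, if 0 < p x then p x * Real.log (p x / q x) else 0

open Real Set InformationTheory

lemma hasDerivAt_add_one_mul_log_sub {t : ℝ} (ht : 0 < t) :
    HasDerivAt (fun t ↦ (t + 1) * log t - 2 * (t - 1)) (klFun t / t) t := by
  have h : HasDerivAt (fun t ↦ (t + 1) * log t - 2 * (t - 1))
      (1 * log t + (t + 1) * t⁻¹ - 2 * 1) t :=
    (((hasDerivAt_id t).add_const 1).fun_mul (hasDerivAt_log ht.ne')).fun_sub
      (((hasDerivAt_id t).sub_const 1).const_mul 2)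
  refine h.congr_deriv ?_
  rw [klFun_apply]
  field_simp
  ring

lemma monotoneOn_add_one_mul_log_sub :
    MonotoneOn (fun t ↦ (t + 1) * log t - 2 * (t - 1)) (Ioi 0) := by
  refine monotoneOn_of_hasDerivWithinAt_nonneg (convex_Ioi 0)
    (fun t ht ↦ (hasDerivAt_add_one_mul_log_sub ht).continuousAt.continuousWithinAt)
    (fun t ht ↦ (hasDerivAt_add_one_mul_log_sub (interior_subset ht)).hasDerivWithinAt) ?_
  intro t ht
  rw [interior_Ioi] at ht
  exact div_nonneg (klFun_nonneg (le_of_lt ht)) (le_of_lt ht)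

lemma hasDerivAt_mul_klFun_sub_sq {t : ℝ} (ht : 0 < t) :
    HasDerivAt (fun t ↦ 2 * (t + 2) * klFun t - 3 * (t - 1) ^ 2)
      (4 * ((t + 1) * log t - 2 * (t - 1))) t := by
  have h : HasDerivAt (fun t ↦ 2 * (t + 2) * klFun t - 3 * (t - 1) ^ 2)
      (2 * 1 * klFun t + 2 * (t + 2) * log t - 3 * (2 * (t - 1) ^ (2 - 1) * 1)) t :=
    ((((hasDerivAt_id t).add_const 2).const_mul 2).fun_mul (hasDerivAt_klFun ht.ne')).fun_sub
      ((((hasDerivAt_id t).sub_const 1).fun_pow 2).const_mul 3)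
  refine h.congr_deriv ?_
  rw [klFun_apply]
  ring

lemma three_mul_sq_sub_one_le_klFun {t : ℝ} (ht : 0 ≤ t) :
    3 * (t - 1) ^ 2 ≤ 2 * (t + 2) * klFun t := by
  set F : ℝ → ℝ := fun t ↦ 2 * (t + 2) * klFun t - 3 * (t - 1) ^ 2
  have hF : Continuous F := by fun_prop
  have hF1 : F 1 = 0 := by simp [F, klFun_one]
  suffices 0 ≤ F t by simpa [F, sub_nonneg] using this
  rcases le_total t 1 with h1 | h1
  · have : AntitoneOn F (Icc 0 1) := by
      refine antitoneOn_of_hasDerivWithinAt_nonpos (convex_Icc 0 1) hF.continuousOn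
        (fun s hs ↦ (hasDerivAt_mul_klFun_sub_sq
          (by rw [interior_Icc] at hs; exact hs.1)).hasDerivWithinAt) ?_
      intro s hs
      rw [interior_Icc] at hs
      have := monotoneOn_add_one_mul_log_sub hs.1 (mem_Ioi.2 one_pos) hs.2.le
      simp only [log_one, mul_zero, sub_self] at this
      linarith
    exact hF1 ▸ this ⟨ht, h1⟩ ⟨zero_le_one, le_rfl⟩ h1
  · have : MonotoneOn F (Ici 1) := by
      refine monotoneOn_of_hasDerivWithinAt_nonneg (convex_Ici 1) hF.continuousOn
        (fun s hs ↦ (hasDerivAt_mul_klFun_sub_sq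
          (by rw [interior_Ici] at hs; exact one_pos.trans hs)).hasDerivWithinAt) ?_
      intro s hs
      rw [interior_Ici] at hs
      have := monotoneOn_add_one_mul_log_sub (mem_Ioi.2 one_pos)
        (mem_Ioi.2 (one_pos.trans hs)) hs.le
      simp only [log_one, mul_zero, sub_self] at this
      linarith
    exact hF1 ▸ this self_mem_Ici h1 h1

lemma three_mul_sq_sub_le_mul_klFun {a b : ℝ} (ha : 0 ≤ a) (hb : 0 ≤ b)
    (hab : b = 0 → a = 0) :
    3 * (a - b) ^ 2 ≤ 2 * (a + 2 * b) * (b * klFun (a / b)) := by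
  rcases hb.eq_or_lt with rfl | hb
  · simp [hab rfl]
  have h := mul_le_mul_of_nonneg_left (three_mul_sq_sub_one_le_klFun (div_nonneg ha hb.le))
    (sq_nonneg b)
  calc 3 * (a - b) ^ 2 = b ^ 2 * (3 * (a / b - 1) ^ 2) := by field_simp
    _ ≤ b ^ 2 * (2 * (a / b + 2) * klFun (a / b)) := h
    _ = 2 * (a + 2 * b) * (b * klFun (a / b)) := by field_simp

lemma mul_klFun_div {a b : ℝ} (hb : b = 0 → a = 0) :
    b * klFun (a / b) = a * log (a / b) + b - a := by
  rcases eq_or_ne b 0 with rfl | hb0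
  · simp [hb rfl]
  rw [klFun_apply]
  field_simp

lemma KL_eq_sum_mul_klFun {X : Type*} [Fintype X] {p q : X → ℝ}
    (hp : IsBelief p) (hq : IsBelief q) (hac : ∀ x, q x = 0 → p x = 0) :
    KL p q = ∑ x, q x * klFun (p x / q x) := by
  have hterm (x : X) :
      (if 0 < p x then p x * log (p x / q x) else 0) = p x * log (p x / q x) := by
    split_ifs with h
    · rfl
    · simp [le_antisymm (not_lt.1 h) (hp.1 x)]
  simp only [mul_klFun_div (hac _), Finset.sum_sub_distrib, Finset.sum_add_distrib, hp.2, hq.2,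
    KL, hterm]
  ring

lemma KL_nonneg {X : Type*} [Fintype X] {p q : X → ℝ}
    (hp : IsBelief p) (hq : IsBelief q) (hac : ∀ x, q x = 0 → p x = 0) : 0 ≤ KL p q := by
  rw [KL_eq_sum_mul_klFun hp hq hac]
  exact Finset.sum_nonneg fun x _ ↦
    mul_nonneg (hq.1 x) (klFun_nonneg (div_nonneg (hp.1 x) (hq.1 x)))

theorem sum_abs_sub_le_sqrt_two_mul_KL {X : Type*} [Fintype X] {p q : X → ℝ}
    (hp : IsBelief p) (hq : IsBelief q) (hac : ∀ x, q x = 0 → p x = 0) :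
    ∑ x, |p x - q x| ≤ √(2 * KL p q) := by
  have hcs := Finset.sum_sq_le_sum_mul_sum_of_sq_le_mul Finset.univ
    (r := fun x ↦ |p x - q x|) (f := fun x ↦ (p x + 2 * q x) / 3)
    (g := fun x ↦ 2 * (q x * klFun (p x / q x)))
    (fun x _ ↦ by have := hp.1 x; have := hq.1 x; positivity)
    (fun x _ ↦ by have := hq.1 x; have := klFun_nonneg (div_nonneg (hp.1 x) (hq.1 x)); positivity)
    (fun x _ ↦ by
      have := three_mul_sq_sub_le_mul_klFun (hp.1 x) (hq.1 x) (hac x)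
      rw [sq_abs]; linarith)
  rw [← Finset.sum_div, Finset.sum_add_distrib, ← Finset.mul_sum, ← Finset.mul_sum, hp.2,
    hq.2, ← KL_eq_sum_mul_klFun hp hq hac] at hcs
  rw [Real.le_sqrt (Finset.sum_nonneg fun x _ ↦ abs_nonneg _)
    (mul_nonneg zero_le_two (KL_nonneg hp hq hac))]
  linarith

lemma abs_sum_mul_le_mul_sum_abs {ι : Type*} (s : Finset ι) {f g : ι → ℝ} {M : ℝ}
    (hf : ∀ i ∈ s, |f i| ≤ M) : |∑ i ∈ s, f i * g i| ≤ M * ∑ i ∈ s, |g i| := by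
  rw [Finset.mul_sum]
  refine (Finset.abs_sum_le_sum_abs _ _).trans (Finset.sum_le_sum fun i hi ↦ ?_)
  rw [abs_mul]
  exact mul_le_mul_of_nonneg_right (hf i hi) (abs_nonneg _)

/-- Model advantage bound: Jensen + Hölder + Pinsker. -/
theorem bounded_expectation_difference_le_sqrt_kl
    {X : Type*} [Fintype X] (p q : X → ℝ)
    (hp : IsBelief p) (hq : IsBelief q)
    (hac : ∀ x, q x = 0 → p x = 0)
    (f : X → ℝ) (M : ℝ) (hf : ∀ x, |f x| ≤ M) :
    |∑ x, f x * (p x - q x)| ≤ M * Real.sqrt (2 * KL p q) := by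
  have hX : Nonempty X := by
    by_contra h
    simpa [not_nonempty_iff.1 h] using hp.2
  have hM : 0 ≤ M := (abs_nonneg _).trans (hf (Classical.arbitrary X))
  calc |∑ x, f x * (p x - q x)| ≤ M * ∑ x, |p x - q x| :=
        abs_sum_mul_le_mul_sum_abs _ fun x _ ↦ hf x
    _ ≤ M * √(2 * KL p q) :=
        mul_le_mul_of_nonneg_left (sum_abs_sub_le_sqrt_two_mul_KL hp hq hac) hM
end

section
/- The EFE belief reward is concave in the belief: for every a ∈ A, all beliefs b₁, b₂ over S, and every λ ∈ [0,1], defining R^{EFE}(b,a) = ∑_s b(s)·R(s,a) + IG(b,a), it holds that R^{EFE}(λ·b₁ + (1−λ)·b₂, a) ≥ λ·R^{EFE}(b₁,a) + (1−λ)·R^{EFE}(b₂,a). -/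
/-- Predicted (one-step open-loop) belief `b_a(s') = ∑_s P(s'|s,a) b(s)`. -/
noncomputable def predBelief {S A : Type*} [Fintype S]
    (T : S → A → S → ℝ) (b : S → ℝ) (a : A) (s' : S) : ℝ :=
  ∑ s, T s a s' * b s

/-- Observation predictive `P(o'|b,a) = ∑_{s'} P(o'|s') b_a(s')`. -/
noncomputable def obsPred {S O A : Type*} [Fintype S]
    (T : S → A → S → ℝ) (L : S → O → ℝ) (b : S → ℝ) (a : A) (o : O) : ℝ :=
  ∑ s', L s' o * predBelief T b a s'

/-- Posterior `τ(b,a,o')(s') = P(o'|s') b_a(s') / P(o'|b,a)`. -/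
noncomputable def postBelief {S O A : Type*} [Fintype S]
    (T : S → A → S → ℝ) (L : S → O → ℝ) (b : S → ℝ) (a : A) (o : O) (s' : S) : ℝ :=
  L s' o * predBelief T b a s' / obsPred T L b a o

/-- Information gain `IG(b,a)`. -/
noncomputable def IG {S O A : Type*} [Fintype S] [Fintype O]
    (T : S → A → S → ℝ) (L : S → O → ℝ) (b : S → ℝ) (a : A) : ℝ :=
  ∑ o, if 0 < obsPred T L b a o then
    obsPred T L b a o * KL (postBelief T L b a o) (predBelief T b a) else 0

/-- EFE belief reward `R^{EFE}(b,a) = ∑_s b(s) R(s,a) + IG(b,a)`. -/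
noncomputable def Refe {S O A : Type*} [Fintype S] [Fintype O]
    (T : S → A → S → ℝ) (L : S → O → ℝ) (R : S → A → ℝ) (b : S → ℝ) (a : A) : ℝ :=
  (∑ s, b s * R s a) + IG T L b a

/-!
The information gain is the mutual information of the next state and the observation:
`IG(b,a) = H(P(·|b,a)) - ∑_{s'} b_a(s') H(P(·|s'))`, the entropy of the observation predictive
minus the expected entropy of the likelihood. Both `b_a` and `P(·|b,a)` depend linearly on `b`,
so the second term is linear in `b` and the first is concave, as `x ↦ -x log x` is concave.
-/

open Finset Real

lemma mul_negMulLog_eq_zero {ℓ q : ℝ} (h : ℓ * q = 0) : q * negMulLog ℓ = 0 := by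
  rcases mul_eq_zero.1 h with h | h <;> simp [h]

/-- Bayes' rule turns the evidence-weighted KL divergence of the posterior from the prior `q`
into an entropy difference; with the convention `0 * KL = 0`, also when the evidence vanishes. -/
lemma ite_mul_KL_posterior {X : Type*} [Fintype X] {ℓ q : X → ℝ}
    (hℓ : ∀ x, 0 ≤ ℓ x) (hq : ∀ x, 0 ≤ q x) :
    (if 0 < ∑ x, ℓ x * q x then
        (∑ x, ℓ x * q x) * KL (fun x => ℓ x * q x / ∑ x, ℓ x * q x) q else 0)
      = negMulLog (∑ x, ℓ x * q x) - ∑ x, q x * negMulLog (ℓ x) := by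
  set Z := ∑ x, ℓ x * q x with hZ
  have hprod : ∀ x, 0 ≤ ℓ x * q x := fun x => mul_nonneg (hℓ x) (hq x)
  split_ifs with hZpos
  · have hterm : ∀ x, Z * (if 0 < ℓ x * q x / Z then
          ℓ x * q x / Z * log (ℓ x * q x / Z / q x) else 0)
        = -(q x * negMulLog (ℓ x)) - ℓ x * q x * log Z := by
      intro x
      split_ifs with hx
      · have hℓq : 0 < ℓ x * q x := (div_pos_iff_of_pos_right hZpos).1 hx
        have hℓx : 0 < ℓ x := pos_of_mul_pos_left hℓq (hq x)
        have hqx : 0 < q x := pos_of_mul_pos_right hℓq (hℓ x)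
        rw [show ℓ x * q x / Z / q x = ℓ x / Z by field_simp,
          log_div hℓx.ne' hZpos.ne', negMulLog]
        field_simp
      · have hℓq : ℓ x * q x = 0 :=
          le_antisymm (by simpa [div_pos_iff_of_pos_right hZpos] using hx) (hprod x)
        rw [mul_negMulLog_eq_zero hℓq, hℓq]
        ring
    rw [KL, mul_sum, sum_congr rfl fun x _ => hterm x, sum_sub_distrib, sum_neg_distrib,
      ← sum_mul, ← hZ, negMulLog]
    ring
  · have hZ0 : Z = 0 := le_antisymm (not_lt.1 hZpos) (sum_nonneg fun x _ => hprod x)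
    have hvanish := (sum_eq_zero_iff_of_nonneg fun x _ => hprod x).1 hZ0
    rw [hZ0, sum_eq_zero fun x hx => mul_negMulLog_eq_zero (hvanish x hx), negMulLog_zero,
      sub_zero]

section

variable {S O A : Type*} [Fintype S]

lemma predBelief_nonneg {T : S → A → S → ℝ} (hT : ∀ s a s', 0 ≤ T s a s') {b : S → ℝ}
    (hb : ∀ s, 0 ≤ b s) (a : A) (s' : S) : 0 ≤ predBelief T b a s' :=
  sum_nonneg fun s _ => mul_nonneg (hT s a s') (hb s)

lemma obsPred_nonneg {T : S → A → S → ℝ} (hT : ∀ s a s', 0 ≤ T s a s') {L : S → O → ℝ}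
    (hL : ∀ s o, 0 ≤ L s o) {b : S → ℝ} (hb : ∀ s, 0 ≤ b s) (a : A) (o : O) :
    0 ≤ obsPred T L b a o :=
  sum_nonneg fun s' _ => mul_nonneg (hL s' o) (predBelief_nonneg hT hb a s')

lemma sum_mix_mul (f g c : S → ℝ) (μ ν : ℝ) :
    ∑ s, (μ * f s + ν * g s) * c s = μ * ∑ s, f s * c s + ν * ∑ s, g s * c s := by
  simp only [mul_sum, ← sum_add_distrib]
  exact sum_congr rfl fun s _ => by ring

lemma predBelief_mix (T : S → A → S → ℝ) (b₁ b₂ : S → ℝ) (μ ν : ℝ) (a : A) (s' : S) :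
    predBelief T (fun s => μ * b₁ s + ν * b₂ s) a s'
      = μ * predBelief T b₁ a s' + ν * predBelief T b₂ a s' := by
  simp only [predBelief, mul_comm (T _ a s'), sum_mix_mul]

lemma obsPred_mix (T : S → A → S → ℝ) (L : S → O → ℝ) (b₁ b₂ : S → ℝ) (μ ν : ℝ) (a : A)
    (o : O) :
    obsPred T L (fun s => μ * b₁ s + ν * b₂ s) a o
      = μ * obsPred T L b₁ a o + ν * obsPred T L b₂ a o := by
  simp only [obsPred, predBelief_mix, mul_comm (L _ o), sum_mix_mul]

variable [Fintype O]

lemma IG_eq_entropy_sub {T : S → A → S → ℝ} (hT : ∀ s a s', 0 ≤ T s a s') {L : S → O → ℝ}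
    (hL : ∀ s o, 0 ≤ L s o) {b : S → ℝ} (hb : ∀ s, 0 ≤ b s) (a : A) :
    IG T L b a = ∑ o, negMulLog (obsPred T L b a o)
      - ∑ s', predBelief T b a s' * ∑ o, negMulLog (L s' o) := by
  refine (sum_congr rfl fun o _ =>
    ite_mul_KL_posterior (fun s' => hL s' o) (predBelief_nonneg hT hb a)).trans ?_
  rw [sum_sub_distrib, sum_comm]
  simp only [mul_sum, obsPred]

lemma sum_negMulLog_obsPred_concave {T : S → A → S → ℝ} (hT : ∀ s a s', 0 ≤ T s a s')
    {L : S → O → ℝ} (hL : ∀ s o, 0 ≤ L s o) {b₁ b₂ : S → ℝ} (hb₁ : ∀ s, 0 ≤ b₁ s)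
    (hb₂ : ∀ s, 0 ≤ b₂ s) {μ ν : ℝ} (hμ : 0 ≤ μ) (hν : 0 ≤ ν) (hμν : μ + ν = 1) (a : A) :
    μ * ∑ o, negMulLog (obsPred T L b₁ a o) + ν * ∑ o, negMulLog (obsPred T L b₂ a o)
      ≤ ∑ o, negMulLog (obsPred T L (fun s => μ * b₁ s + ν * b₂ s) a o) := by
  rw [mul_sum, mul_sum, ← sum_add_distrib]
  refine sum_le_sum fun o _ => ?_
  rw [obsPred_mix]
  exact concaveOn_negMulLog.2 (obsPred_nonneg hT hL hb₁ a o) (obsPred_nonneg hT hL hb₂ a o)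
    hμ hν hμν

end

/-- The EFE belief reward is concave in the belief (Proposition 2). -/
theorem efe_reward_concave
    {S O A : Type*} [Fintype S] [Fintype O]
    (T : S → A → S → ℝ) (hT : ∀ s a, IsBelief (T s a))
    (L : S → O → ℝ) (hL : ∀ s, IsBelief (L s))
    (R : S → A → ℝ)
    (a : A)
    (b₁ b₂ : S → ℝ) (hb₁ : IsBelief b₁) (hb₂ : IsBelief b₂)
    (lam : ℝ) (hlam0 : 0 ≤ lam) (hlam1 : lam ≤ 1) :
    Refe T L R (fun s => lam * b₁ s + (1 - lam) * b₂ s) a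
      ≥ lam * Refe T L R b₁ a + (1 - lam) * Refe T L R b₂ a := by
  have hT₀ : ∀ s a s', 0 ≤ T s a s' := fun s a => (hT s a).1
  have hL₀ : ∀ s o, 0 ≤ L s o := fun s => (hL s).1
  have hmix₀ : ∀ s, 0 ≤ lam * b₁ s + (1 - lam) * b₂ s := fun s =>
    add_nonneg (mul_nonneg hlam0 (hb₁.1 s)) (mul_nonneg (sub_nonneg.2 hlam1) (hb₂.1 s))
  have hentropy := sum_negMulLog_obsPred_concave hT₀ hL₀ hb₁.1 hb₂.1 hlam0
    (sub_nonneg.2 hlam1) (add_sub_cancel lam 1) a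
  simp only [Refe, IG_eq_entropy_sub hT₀ hL₀ hmix₀, IG_eq_entropy_sub hT₀ hL₀ hb₁.1,
    IG_eq_entropy_sub hT₀ hL₀ hb₂.1, predBelief_mix, sum_mix_mul]
  linarith
end

section
/- For every k ∈ ℕ, the open-loop value function V^{open}_k is convex on beliefs: for all beliefs b₁, b₂ over S and all λ ∈ [0,1], V^{open}_k(λ·b₁ + (1−λ)·b₂) ≤ λ·V^{open}_k(b₁) + (1−λ)·V^{open}_k(b₂). -/
/-- Open-loop finite-horizon action value `Q^{open}_k(b,a)`. -/
noncomputable def Qopen {S A : Type*} [Fintype S] [Fintype A] [Nonempty A]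
    (γ : ℝ) (T : S → A → S → ℝ) (R : S → A → ℝ) :
    ℕ → (S → ℝ) → A → ℝ
  | 0, b, a => ∑ s, b s * R s a
  | (k + 1), b, a =>
      (∑ s, b s * R s a) +
        γ * Finset.univ.sup' Finset.univ_nonempty (Qopen γ T R k (predBelief T b a))

/-- Open-loop finite-horizon value `V^{open}_k(b) = max_a Q^{open}_k(b,a)`. -/
noncomputable def Vopen {S A : Type*} [Fintype S] [Fintype A] [Nonempty A]
    (γ : ℝ) (T : S → A → S → ℝ) (R : S → A → ℝ)
    (k : ℕ) (b : S → ℝ) : ℝ :=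
  Finset.univ.sup' Finset.univ_nonempty (Qopen γ T R k b)

open Set

theorem ConvexOn.finset_sup' {𝕜 E β ι : Type*} [Semiring 𝕜] [PartialOrder 𝕜] [AddCommMonoid E]
    [SMul 𝕜 E] [AddCommMonoid β] [LinearOrder β] [IsOrderedAddMonoid β] [Module 𝕜 β]
    [PosSMulStrictMono 𝕜 β] {s : Set E} {t : Finset ι} (H : t.Nonempty) {f : ι → E → β}
    (hf : ∀ i ∈ t, ConvexOn 𝕜 s (f i)) : ConvexOn 𝕜 s fun x => t.sup' H fun i => f i x := by
  simpa only [← Finset.sup'_apply] using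
    Finset.sup'_induction H f (p := ConvexOn 𝕜 s) (fun _ hg _ hh => hg.sup hh) hf

section OpenLoop

variable {S A : Type*} [Fintype S] {T : S → A → S → ℝ} {R : S → A → ℝ}

theorem ConvexOn.comp_predBelief {f : (S → ℝ) → ℝ} (hf : ConvexOn ℝ univ f) (a : A) :
    ConvexOn ℝ univ fun b => f (predBelief T b a) :=
  hf.comp_linearMap (Matrix.of fun s' s => T s a s').mulVecLin

theorem convexOn_expected_reward (a : A) : ConvexOn ℝ univ fun b : S → ℝ => ∑ s, b s * R s a :=
  (Fintype.linearCombination ℝ fun s => R s a).convexOn convex_univ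

variable [Fintype A] [Nonempty A] {γ : ℝ}

theorem convexOn_Vopen_of_convexOn_Qopen {k : ℕ}
    (hQ : ∀ a, ConvexOn ℝ univ fun b => Qopen γ T R k b a) : ConvexOn ℝ univ (Vopen γ T R k) :=
  ConvexOn.finset_sup' _ fun a _ => hQ a

theorem convexOn_Qopen (hγ : 0 ≤ γ) (k : ℕ) (a : A) :
    ConvexOn ℝ univ fun b => Qopen γ T R k b a := by
  induction k generalizing a with
  | zero => exact convexOn_expected_reward a
  | succ k ih =>
    exact (convexOn_expected_reward a).add
      (((convexOn_Vopen_of_convexOn_Qopen ih).comp_predBelief a).smul hγ)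

theorem convexOn_Vopen (hγ : 0 ≤ γ) (k : ℕ) : ConvexOn ℝ univ (Vopen γ T R k) :=
  convexOn_Vopen_of_convexOn_Qopen (convexOn_Qopen hγ k)

end OpenLoop

theorem open_loop_value_convex_general
    {S A : Type*} [Fintype S] [Fintype A] [Nonempty A]
    (γ : ℝ) (hγ0 : 0 < γ)
    (T : S → A → S → ℝ)
    (R : S → A → ℝ) :
    ∀ (k : ℕ) (b₁ b₂ : S → ℝ), IsBelief b₁ → IsBelief b₂ →
      ∀ lam : ℝ, 0 ≤ lam → lam ≤ 1 →
      Vopen γ T R k (fun s => lam * b₁ s + (1 - lam) * b₂ s)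
        ≤ lam * Vopen γ T R k b₁ + (1 - lam) * Vopen γ T R k b₂ := by
  intro k b₁ b₂ _ _ lam hlam0 hlam1
  exact (convexOn_Vopen hγ0.le k).2 (mem_univ b₁) (mem_univ b₂) hlam0 (sub_nonneg.2 hlam1)
    (add_sub_cancel lam 1)

/-- The open-loop value function is convex on beliefs. -/
theorem open_loop_value_convex
    {S A : Type*} [Fintype S] [Fintype A] [Nonempty A]
    (γ : ℝ) (hγ0 : 0 < γ) (hγ1 : γ < 1)
    (T : S → A → S → ℝ) (hT : ∀ s a, IsBelief (T s a))
    (R : S → A → ℝ) :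
    ∀ (k : ℕ) (b₁ b₂ : S → ℝ), IsBelief b₁ → IsBelief b₂ →
      ∀ lam : ℝ, 0 ≤ lam → lam ≤ 1 →
      Vopen γ T R k (fun s => lam * b₁ s + (1 - lam) * b₂ s)
        ≤ lam * Vopen γ T R k b₁ + (1 - lam) * Vopen γ T R k b₂ :=
  open_loop_value_convex_general γ hγ0 T R
end
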